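/- arXiv:1906.03536 — 3 statements merged into one kernel-verified Lean document; each statement's English description precedes it below -/
import Mathlib

section
/- Define f(λ) = Ti₂(λ) − ln(λ)·arctan(λ) for λ > 0, where Ti₂ is the inverse tangent integral. Then f is strictly increasing on (0,1), strictly decreasing on (1,∞), satisfies f(λ) = f(1/λ) for all λ > 0, and 0 < f(λ) ≤ f(1) = Ti₂(1) < 1. -/
/-!
With `f λ = Ti₂ λ - ln λ · arctan λ`, the integrand of `Ti₂` cancels in the derivative and
`f' λ = -ln λ / (1 + λ²)`, which gives the monotonicity and the maximum at `1`. The inversion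
formula `Ti₂ λ = Ti₂ (1/λ) + (π/2) ln λ` and `arctan λ + arctan (1/λ) = π/2` give `f (1/λ) = f λ`,
so positivity only needs checking on `(0, 1]`, where `Ti₂ λ > 0` and `-ln λ · arctan λ ≥ 0`.
Finally `Ti₂ 1 < 1` because `arctan t < t` for `t > 0`.
-/

open Real Set MeasureTheory

noncomputable def Ti2 (x : ℝ) : ℝ := ∫ t in (0:ℝ)..x, Real.arctan t / t

lemma Real.arctan_le_self {x : ℝ} (hx : 0 ≤ x) : arctan x ≤ x := by
  simpa [tan_arctan] using le_tan (arctan_nonneg.2 hx) (arctan_lt_pi_div_two x)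

lemma Real.arctan_lt_self {x : ℝ} (hx : 0 < x) : arctan x < x := by
  simpa [tan_arctan] using lt_tan (arctan_pos.2 hx) (arctan_lt_pi_div_two x)

lemma Real.abs_arctan_le_abs (x : ℝ) : |arctan x| ≤ |x| := by
  rcases le_total 0 x with hx | hx
  · rw [abs_of_nonneg hx, abs_of_nonneg (arctan_nonneg.2 hx)]
    exact arctan_le_self hx
  · rw [← abs_neg, ← arctan_neg, ← abs_neg x, abs_of_nonneg (neg_nonneg.2 hx),
      abs_of_nonneg (arctan_nonneg.2 (neg_nonneg.2 hx))]
    exact arctan_le_self (neg_nonneg.2 hx)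

lemma norm_arctan_div_self_le_one (t : ℝ) : ‖arctan t / t‖ ≤ 1 := by
  rw [norm_div]
  exact div_le_one_of_le₀ (abs_arctan_le_abs t) (norm_nonneg t)

lemma intervalIntegrable_arctan_div_self (a b : ℝ) :
    IntervalIntegrable (fun t => arctan t / t) volume a b :=
  intervalIntegrable_const.mono_fun' (measurable_arctan.div measurable_id).aestronglyMeasurable
    (ae_of_all _ norm_arctan_div_self_le_one)

lemma hasDerivAt_Ti2 {x : ℝ} (hx : x ≠ 0) : HasDerivAt Ti2 (arctan x / x) x :=
  intervalIntegral.integral_hasDerivAt_right (intervalIntegrable_arctan_div_self 0 x)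
    (by fun_prop : Measurable fun t => arctan t / t).stronglyMeasurable.stronglyMeasurableAtFilter
    (by fun_prop (disch := exact hx))

lemma Ti2_pos {x : ℝ} (hx : 0 < x) : 0 < Ti2 x :=
  intervalIntegral.intervalIntegral_pos_of_pos_on (intervalIntegrable_arctan_div_self 0 x)
    (fun _ ht => div_pos (arctan_pos.2 ht.1) ht.1) hx

lemma Ti2_one_lt_one : Ti2 1 < 1 := by
  have h : 0 < ∫ t in (0:ℝ)..1, (1 - arctan t / t) :=
    intervalIntegral.intervalIntegral_pos_of_pos_on
      (intervalIntegrable_const.sub (intervalIntegrable_arctan_div_self 0 1))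
      (fun t ht => sub_pos.2 ((div_lt_one ht.1).2 (arctan_lt_self ht.1))) one_pos
  rw [intervalIntegral.integral_sub intervalIntegrable_const
    (intervalIntegrable_arctan_div_self 0 1)] at h
  simpa [Ti2] using h

theorem Ti2_eq_Ti2_inv_add {x : ℝ} (hx : 0 < x) : Ti2 x = Ti2 x⁻¹ + π / 2 * log x := by
  set g : ℝ → ℝ := fun y => Ti2 y - Ti2 y⁻¹ - π / 2 * log y
  have hg : ∀ y ∈ Ioi (0:ℝ), HasDerivAt g 0 y := by
    intro y (hy : 0 < y)
    have hinv := (hasDerivAt_Ti2 (inv_ne_zero hy.ne')).comp y (hasDerivAt_inv hy.ne')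
    refine (((hasDerivAt_Ti2 hy.ne').sub hinv).sub
      ((hasDerivAt_log hy.ne').const_mul (π / 2))).congr_deriv ?_
    -- the derivative is `(arctan y + arctan y⁻¹ - π / 2) / y`
    rw [arctan_inv_of_pos hy]
    field_simp
    ring
  have hconst : g x = g 1 :=
    isOpen_Ioi.is_const_of_deriv_eq_zero isPreconnected_Ioi
      (fun y hy => (hg y hy).differentiableAt.differentiableWithinAt)
      (fun y hy => (hg y hy).deriv) hx (mem_Ioi.2 one_pos)
  simp only [g, inv_one, log_one, sub_self, mul_zero] at hconst
  linarith

noncomputable def ti2LogArctan (x : ℝ) : ℝ := Ti2 x - log x * arctan x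

lemma hasDerivAt_ti2LogArctan {x : ℝ} (hx : 0 < x) :
    HasDerivAt ti2LogArctan (-log x / (1 + x ^ 2)) x := by
  refine ((hasDerivAt_Ti2 hx.ne').sub
    ((hasDerivAt_log hx.ne').mul (hasDerivAt_arctan x))).congr_deriv ?_
  field_simp
  ring

lemma continuousOn_ti2LogArctan : ContinuousOn ti2LogArctan (Ioi 0) :=
  fun _ hx => (hasDerivAt_ti2LogArctan hx).continuousAt.continuousWithinAt

lemma strictMonoOn_ti2LogArctan : StrictMonoOn ti2LogArctan (Ioc 0 1) := by
  refine strictMonoOn_of_deriv_pos (convex_Ioc 0 1)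
    (continuousOn_ti2LogArctan.mono Ioc_subset_Ioi_self) fun x hx => ?_
  rw [interior_Ioc] at hx
  rw [(hasDerivAt_ti2LogArctan hx.1).deriv]
  exact div_pos (neg_pos.2 (log_neg hx.1 hx.2)) (by positivity)

lemma strictAntiOn_ti2LogArctan : StrictAntiOn ti2LogArctan (Ici 1) := by
  refine strictAntiOn_of_deriv_neg (convex_Ici 1)
    (continuousOn_ti2LogArctan.mono (Ici_subset_Ioi.2 one_pos)) fun x hx => ?_
  rw [interior_Ici] at hx
  rw [(hasDerivAt_ti2LogArctan (zero_lt_one.trans hx)).deriv]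
  exact div_neg_of_neg_of_pos (neg_neg_of_pos (log_pos hx)) (by positivity)

lemma ti2LogArctan_le_ti2LogArctan_one {x : ℝ} (hx : 0 < x) :
    ti2LogArctan x ≤ ti2LogArctan 1 := by
  rcases le_total x 1 with h | h
  · exact strictMonoOn_ti2LogArctan.monotoneOn ⟨hx, h⟩ ⟨one_pos, le_rfl⟩ h
  · exact strictAntiOn_ti2LogArctan.antitoneOn self_mem_Ici h h

theorem ti2LogArctan_inv {x : ℝ} (hx : 0 < x) : ti2LogArctan x⁻¹ = ti2LogArctan x := by
  simp only [ti2LogArctan, log_inv, arctan_inv_of_pos hx, Ti2_eq_Ti2_inv_add hx]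
  ring

lemma ti2LogArctan_pos {x : ℝ} (hx : 0 < x) : 0 < ti2LogArctan x := by
  wlog h : x ≤ 1 generalizing x
  · rw [← ti2LogArctan_inv hx]
    exact this (inv_pos.2 hx) (inv_le_one_of_one_le₀ (le_of_not_ge h))
  have : log x * arctan x ≤ 0 :=
    mul_nonpos_of_nonpos_of_nonneg (log_nonpos hx.le h) (arctan_nonneg.2 hx.le)
  unfold ti2LogArctan
  linarith [Ti2_pos hx]

theorem Ti2_log_arctan_properties :
    StrictMonoOn (fun l : ℝ => Ti2 l - Real.log l * Real.arctan l) (Ioo 0 1) ∧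
    StrictAntiOn (fun l : ℝ => Ti2 l - Real.log l * Real.arctan l) (Ioi 1) ∧
    (∀ l : ℝ, 0 < l →
      Ti2 l - Real.log l * Real.arctan l = Ti2 (1/l) - Real.log (1/l) * Real.arctan (1/l)) ∧
    (∀ l : ℝ, 0 < l →
      0 < Ti2 l - Real.log l * Real.arctan l ∧
      Ti2 l - Real.log l * Real.arctan l ≤ Ti2 1 - Real.log 1 * Real.arctan 1) ∧
    Ti2 1 - Real.log 1 * Real.arctan 1 = Ti2 1 ∧ Ti2 1 < 1 := by
  refine ⟨strictMonoOn_ti2LogArctan.mono Ioo_subset_Ioc_self,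
    strictAntiOn_ti2LogArctan.mono Ioi_subset_Ici_self,
    fun l hl => ?_, fun l hl => ⟨ti2LogArctan_pos hl, ti2LogArctan_le_ti2LogArctan_one hl⟩,
    by simp, Ti2_one_lt_one⟩
  rw [one_div]
  exact (ti2LogArctan_inv hl).symm
end

section
/- The function ν ↦ arctan²(√ν) is strictly increasing and strictly concave on (0,∞), and satisfies arctan²(√ν) ≤ min(ln(1+ν), π²/4) for all ν > 0. -/
/-!
`arctan² √v` has derivative `(arctan √v / √v) / (1 + v)`, a product of two positive strictly
decreasing factors (the first is the slope from `0` of `arctan`, which is concave on `[0, ∞)`),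
so it is strictly concave. As `arctan x < x`, this derivative is at most `1 / (1 + v)`, the
derivative of `log (1 + v)`, and both functions vanish at `0`.
-/

open Real Set

namespace Real

lemma arctan_lt_self_s15 {x : ℝ} (hx : 0 < x) : arctan x < x := by
  simpa only [tan_arctan] using lt_tan (arctan_pos.2 hx) (arctan_lt_pi_div_two x)

lemma arctan_sq_lt_pi_sq_div_four (x : ℝ) : arctan x ^ 2 < π ^ 2 / 4 := by
  have h := sq_lt_sq' (neg_pi_div_two_lt_arctan x) (arctan_lt_pi_div_two x)
  linarith

lemma strictConcaveOn_arctan_Ici : StrictConcaveOn ℝ (Ici 0) arctan := by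
  refine StrictAntiOn.strictConcaveOn_of_deriv (convex_Ici 0) continuous_arctan.continuousOn ?_
  rw [interior_Ici, deriv_arctan]
  intro a ha b _ hab
  have ha : 0 < a := ha
  dsimp only
  gcongr

lemma strictAntiOn_arctan_div_self : StrictAntiOn (fun x => arctan x / x) (Ioi 0) := by
  intro a ha b hb hab
  simpa only [arctan_zero, sub_zero] using
    strictConcaveOn_arctan_Ici.secant_strict_mono self_mem_Ici (mem_Ici.2 (le_of_lt ha))
      (mem_Ici.2 (le_of_lt hb)) (ne_of_gt ha) (ne_of_gt hb) hab

lemma hasDerivAt_arctan_sqrt_sq {v : ℝ} (hv : 0 < v) :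
    HasDerivAt (fun v => arctan √v ^ 2) (arctan √v / √v / (1 + v)) v := by
  refine (((hasDerivAt_arctan √v).comp v (hasDerivAt_sqrt hv.ne')).pow 2).congr_deriv ?_
  rw [Function.comp_apply, sq_sqrt hv.le]
  field_simp
  ring

lemma strictMonoOn_arctan_sqrt_sq : StrictMonoOn (fun v => arctan √v ^ 2) (Ioi 0) := by
  intro a ha b _ hab
  exact pow_lt_pow_left₀ (arctan_strictMono (sqrt_lt_sqrt (le_of_lt ha) hab))
    (arctan_nonneg.2 (sqrt_nonneg a)) two_ne_zero

lemma strictConcaveOn_arctan_sqrt_sq : StrictConcaveOn ℝ (Ioi 0) (fun v => arctan √v ^ 2) := by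
  refine StrictAntiOn.strictConcaveOn_of_deriv (convex_Ioi 0) (by fun_prop) ?_
  rw [interior_Ioi]
  intro a ha b hb hab
  have ha : 0 < a := ha
  have hb : 0 < b := hb
  rw [(hasDerivAt_arctan_sqrt_sq ha).deriv, (hasDerivAt_arctan_sqrt_sq hb).deriv]
  have hslope : arctan √b / √b < arctan √a / √a :=
    strictAntiOn_arctan_div_self (sqrt_pos.2 ha) (sqrt_pos.2 hb) (sqrt_lt_sqrt ha.le hab)
  have hpos : 0 < arctan √a / √a := div_pos (arctan_pos.2 (sqrt_pos.2 ha)) (sqrt_pos.2 ha)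
  calc arctan √b / √b / (1 + b) < arctan √a / √a / (1 + b) := by gcongr
    _ < arctan √a / √a / (1 + a) := by gcongr

lemma arctan_sqrt_sq_le_log_one_add {v : ℝ} (hv : 0 ≤ v) : arctan √v ^ 2 ≤ log (1 + v) := by
  have hmono : MonotoneOn (fun v => log (1 + v) - arctan √v ^ 2) (Ici 0) := by
    refine monotoneOn_of_hasDerivWithinAt_nonneg (convex_Ici 0)
      (f' := fun v => 1 / (1 + v) - arctan √v / √v / (1 + v)) ?_ ?_ ?_
    · refine ContinuousOn.sub (ContinuousOn.log (by fun_prop) fun x hx => ?_) (by fun_prop)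
      exact ne_of_gt (by linarith [mem_Ici.1 hx])
    · intro x hx
      rw [interior_Ici] at hx
      have hx : 0 < x := hx
      refine HasDerivAt.hasDerivWithinAt (HasDerivAt.sub ?_ (hasDerivAt_arctan_sqrt_sq hx))
      simpa using ((hasDerivAt_id' x).const_add 1).log (by linarith : (0:ℝ) < 1 + x).ne'
    · intro x hx
      rw [interior_Ici] at hx
      have hx : 0 < x := hx
      have hs : 0 < √x := sqrt_pos.2 hx
      have hslope : arctan √x / √x ≤ 1 := (div_le_one hs).2 (arctan_lt_self_s15 hs).le
      rw [← sub_div]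
      exact div_nonneg (by linarith) (by linarith)
  simpa using hmono self_mem_Ici (mem_Ici.2 hv) hv

end Real

theorem arctan_sq_sqrt_properties :
    StrictMonoOn (fun v : ℝ => (Real.arctan (Real.sqrt v))^2) (Ioi 0) ∧
    StrictConcaveOn ℝ (Ioi 0) (fun v : ℝ => (Real.arctan (Real.sqrt v))^2) ∧
    ∀ v : ℝ, 0 < v →
      (Real.arctan (Real.sqrt v))^2 ≤ min (Real.log (1 + v)) (Real.pi^2 / 4) :=
  ⟨strictMonoOn_arctan_sqrt_sq, strictConcaveOn_arctan_sqrt_sq, fun _ hv =>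
    le_min (arctan_sqrt_sq_le_log_one_add hv.le) (arctan_sq_lt_pi_sq_div_four _).le⟩
end

section
/- For every real ν > 0: −(arctan(iν√i) + arctan(−i√i/ν)) = arctan(ν/√2 − 1/(ν√2)), where arctan on complex arguments is defined via the principal branch and √i = (1+i)/√2. -/
/-!
With `a = iν√i` and `b = -i√i/ν` one has `Re a < 0 < Re b` and `ab = i`, so the arguments of
`(1 + ai)/(1 - ai)` and `(1 + bi)/(1 - bi)` lie in `(-π, 0)` and `(0, π)`: the principal logarithm
is additive on their product, and the addition formula `arctan a + arctan b = arctan ((a + b)/(1 - ab))`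
holds with no branch correction. Here `(a + b)/(1 - ab) = 1/(ν√2) - ν/√2` is real.
-/

open Complex

noncomputable def carctan (z : ℂ) : ℂ :=
  (1 / (2 * Complex.I)) * Complex.log ((1 + Complex.I * z) / (1 - Complex.I * z))

noncomputable def sqrtI : ℂ := (1 + Complex.I) / Real.sqrt 2

theorem carctan_eq_arctan (z : ℂ) : carctan z = arctan z := by
  have h2I : (1 : ℂ) / (2 * I) = -I / 2 := by
    field_simp
    linear_combination I_sq
  rw [carctan, arctan, h2I, mul_comm I z]

namespace Complex

theorem one_sub_mul_I_ne_zero {z : ℂ} (hz : z.re ≠ 0) : 1 - z * I ≠ 0 := fun h ↦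
  hz (by simpa using congrArg im h)

theorem one_add_mul_I_ne_zero {z : ℂ} (hz : z.re ≠ 0) : 1 + z * I ≠ 0 := fun h ↦
  hz (by simpa using congrArg im h)

theorem im_one_add_mul_I_div_one_sub_mul_I (z : ℂ) :
    ((1 + z * I) / (1 - z * I)).im = 2 * z.re / normSq (1 - z * I) := by
  rw [div_im, ← sub_div]
  congr 1
  simp only [add_im, sub_im, add_re, sub_re, one_im, one_re, mul_im, mul_re, I_re, I_im]
  ring

theorem one_add_mul_I_div_one_sub_mul_I_mul {x y : ℂ} (hx : 1 - x * I ≠ 0)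
    (hy : 1 - y * I ≠ 0) (hxy : 1 - x * y ≠ 0) :
    (1 + x * I) / (1 - x * I) * ((1 + y * I) / (1 - y * I))
      = (1 + (x + y) / (1 - x * y) * I) / (1 - (x + y) / (1 - x * y) * I) := by
  have hden : 1 - (x + y) / (1 - x * y) * I ≠ 0 := by
    rw [← mul_ne_zero_iff_right hxy]
    convert mul_ne_zero hx hy using 1
    field_simp
    linear_combination -x * y * I_sq
  rw [div_mul_div_comm, div_eq_div_iff (mul_ne_zero hx hy) hden]
  field_simp
  linear_combination -2 * x * y * (x + y) * I * I_sq

theorem mul_ne_one_of_re_neg_of_re_pos {x y : ℂ} (hx : x.re < 0) (hy : 0 < y.re) :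
    x * y ≠ 1 := by
  intro h
  have hx0 : x ≠ 0 := fun h0 ↦ hx.ne (by simp [h0])
  have hyx : y.re = x.re / normSq x := by rw [eq_inv_of_mul_eq_one_right h, inv_re]
  have : x.re / normSq x < 0 := div_neg_of_neg_of_pos hx (normSq_pos.2 hx0)
  linarith

theorem arctan_add_of_re_neg_of_re_pos {x y : ℂ} (hx : x.re < 0) (hy : 0 < y.re) :
    arctan x + arctan y = arctan ((x + y) / (1 - x * y)) := by
  have hx' : 1 - x * I ≠ 0 := one_sub_mul_I_ne_zero hx.ne
  have hy' : 1 - y * I ≠ 0 := one_sub_mul_I_ne_zero hy.ne'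
  have hxy : 1 - x * y ≠ 0 := sub_ne_zero.2 (mul_ne_one_of_re_neg_of_re_pos hx hy).symm
  have harg_x : ((1 + x * I) / (1 - x * I)).arg < 0 := by
    rw [arg_neg_iff, im_one_add_mul_I_div_one_sub_mul_I]
    exact div_neg_of_neg_of_pos (by linarith) (normSq_pos.2 hx')
  have harg_y : 0 ≤ ((1 + y * I) / (1 - y * I)).arg := by
    rw [arg_nonneg_iff, im_one_add_mul_I_div_one_sub_mul_I]
    exact (div_pos (by linarith) (normSq_pos.2 hy')).le
  have hlog := log_mul (div_ne_zero (one_add_mul_I_ne_zero hx.ne) hx')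
    (div_ne_zero (one_add_mul_I_ne_zero hy.ne') hy')
    ⟨by linarith [neg_pi_lt_arg ((1 + x * I) / (1 - x * I))],
      by linarith [arg_le_pi ((1 + y * I) / (1 - y * I))]⟩
  rw [arctan, arctan, arctan, ← mul_add, ← hlog, one_add_mul_I_div_one_sub_mul_I_mul hx' hy' hxy]

end Complex

theorem h_nu_identity (v : ℝ) (hv : 0 < v) :
    -(carctan (Complex.I * v * sqrtI) + carctan (-Complex.I * sqrtI / v))
      = (Real.arctan (v / Real.sqrt 2 - 1 / (v * Real.sqrt 2)) : ℂ) := by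
  have hre_a : (Complex.I * v * sqrtI).re < 0 := by simp [sqrtI, div_re, hv]
  have hre_b : 0 < (-Complex.I * sqrtI / v).re := by simp [sqrtI, div_re, hv]
  have hsum : (Complex.I * v * sqrtI + -Complex.I * sqrtI / v)
      / (1 - Complex.I * v * sqrtI * (-Complex.I * sqrtI / v))
      = ((-(v / Real.sqrt 2 - 1 / (v * Real.sqrt 2)) : ℝ) : ℂ) := by
    have hs2 : (Real.sqrt 2 : ℂ) ^ 2 = 2 := by exact_mod_cast Real.sq_sqrt zero_le_two
    have hsC : (Real.sqrt 2 : ℂ) ≠ 0 := by exact_mod_cast (Real.sqrt_pos.2 two_pos).ne'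
    have hvC : (v : ℂ) ≠ 0 := by exact_mod_cast hv.ne'
    have h1I : (1 + I) ^ 2 = 2 * I := by linear_combination I_sq
    have hden : (2 : ℂ) - 2 * I ≠ 0 := fun h ↦ by simpa using congrArg im h
    rw [sqrtI]
    push_cast
    field_simp
    rw [hs2, h1I, I_sq, div_eq_iff (by convert hden using 1; ring)]
    linear_combination (2 * (v : ℂ) ^ 2 - 2) * I_sq
  rw [carctan_eq_arctan, carctan_eq_arctan, arctan_add_of_re_neg_of_re_pos hre_a hre_b, hsum,
    ← ofReal_arctan, Real.arctan_neg, ofReal_neg, neg_neg]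
end
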